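/- arXiv:2103.16301 — 4 statements merged into one kernel-verified Lean document; each statement's English description precedes it below -/
import Mathlib

section
/- Suppose N : ℕ → ℝ≥0 satisfies C⁻¹·e^{hL}/L ≤ N(L) ≤ C·e^{hL} for all sufficiently large L, where C, h > 0. Then for every ε > 0 there exists L₀ > 0 such that for every L₁ > 0 there exists L > L₁ with N(L - L₀) ≤ ε · N(L). -/
/-!
Choose `L₀` with `ε e^{h L₀} > 1`. If `ε N(L) < N(L - L₀)` for every `L > L₁`, iterating gives
`ε^k N(L₁ + k L₀) ≤ N(L₁)` for all `k`. But the lower bound makes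
`ε^k N(L₁ + k L₀) ≥ C⁻¹ e^{h L₁} (ε e^{h L₀})^k / (L₁ + k L₀)`, which grows exponentially in `k`.
-/

open Filter Real Topology

theorem eventually_add_mul_lt_pow {r : ℝ} (hr : 1 < r) (a b : ℝ) :
    ∀ᶠ n : ℕ in atTop, a + b * n < r ^ n := by
  have hlim : Tendsto (fun n : ℕ => (a + b * n) / r ^ n) atTop (𝓝 0) := by
    have hinv := tendsto_inv_atTop_zero.comp (tendsto_pow_atTop_atTop_of_one_lt hr)
    have hlin := tendsto_pow_const_div_const_pow_of_one_lt 1 hr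
    convert (hinv.const_mul a).add (hlin.const_mul b) using 2 with n
    · simp only [Function.comp_apply, pow_one]
      ring
    · simp
  filter_upwards [hlim.eventually (gt_mem_nhds one_pos)] with n hn
  rwa [div_lt_one (by positivity)] at hn

theorem exists_pos_one_lt_mul_exp_mul {ε h : ℝ} (hε : 0 < ε) (hh : 0 < h) :
    ∃ L₀ : ℕ, 0 < L₀ ∧ 1 < ε * exp (h * L₀) := by
  have hlim : Tendsto (fun n : ℕ => ε * exp (h * n)) atTop atTop :=
    (tendsto_exp_atTop.comp (tendsto_natCast_atTop_atTop.const_mul_atTop hh)).const_mul_atTop hε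
  exact ((eventually_gt_atTop 0).and (hlim.eventually_gt_atTop 1)).exists

theorem pow_mul_le_of_forall_mul_le_sub {N : ℕ → ℝ} {ε : ℝ} (hε : 0 ≤ ε) {L₀ L₁ : ℕ} (hL₀ : 0 < L₀)
    (hstep : ∀ L, L₁ < L → ε * N L ≤ N (L - L₀)) (k : ℕ) :
    ε ^ k * N (L₁ + k * L₀) ≤ N L₁ := by
  induction k with
  | zero => simp
  | succ k ih =>
    have hsub : L₁ + (k + 1) * L₀ - L₀ = L₁ + k * L₀ := by rw [add_one_mul]; omega
    calc ε ^ (k + 1) * N (L₁ + (k + 1) * L₀)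
        = ε ^ k * (ε * N (L₁ + (k + 1) * L₀)) := by ring
      _ ≤ ε ^ k * N (L₁ + k * L₀) := by
        gcongr
        rw [← hsub]
        exact hstep _ (by nlinarith)
      _ ≤ N L₁ := ih

theorem tendsto_pow_mul_add_mul_atTop {N : ℕ → ℝ} {c h ε : ℝ} (hc : 0 < c) {L₀ L₂ : ℕ}
    (hL₀ : 0 < L₀) (hlow : ∀ L, L₂ ≤ L → c * exp (h * L) / L ≤ N L)
    (hr : 1 < ε * exp (h * L₀)) (L₁ : ℕ) :
    Tendsto (fun k : ℕ => ε ^ k * N (L₁ + k * L₀)) atTop atTop := by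
  have hε : 0 < ε := pos_of_mul_pos_left (zero_lt_one.trans hr) (exp_pos _).le
  set r := ε * exp (h * L₀)
  set K := c * exp (h * L₁)
  have hK : 0 < K := by positivity
  rw [tendsto_atTop]
  intro M
  filter_upwards [eventually_add_mul_lt_pow hr (M / K * L₁) (M / K * L₀),
    eventually_ge_atTop (max L₂ 1)] with k hk hkL
  have hkx : k ≤ L₁ + k * L₀ := (Nat.le_mul_of_pos_right k hL₀).trans (Nat.le_add_left _ _)
  have hk₂ : L₂ ≤ L₁ + k * L₀ := (le_of_max_le_left hkL).trans hkx
  have hx : (0 : ℝ) < (L₁ + k * L₀ : ℕ) := by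
    exact_mod_cast (le_of_max_le_right hkL).trans hkx
  calc M ≤ K * r ^ k / (L₁ + k * L₀ : ℕ) := by
        rw [le_div_iff₀ hx]
        calc M * (L₁ + k * L₀ : ℕ) = K * (M / K * L₁ + M / K * L₀ * k) := by
              field_simp
              push_cast
              ring
          _ ≤ K * r ^ k := by gcongr
    _ = ε ^ k * (c * exp (h * (L₁ + k * L₀ : ℕ)) / (L₁ + k * L₀ : ℕ)) := by
        rw [show h * (L₁ + k * L₀ : ℕ) = h * L₁ + k * (h * L₀) by push_cast; ring, exp_add,
          exp_nat_mul]
        ring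
    _ ≤ ε ^ k * N (L₁ + k * L₀) := by
        gcongr
        exact hlow _ hk₂

theorem stmt2_general (N : ℕ → ℝ) (C h : ℝ) (hC : 0 < C) (hh : 0 < h)
    (hbound : ∃ L₂ : ℕ, ∀ L : ℕ, L₂ ≤ L →
      C⁻¹ * Real.exp (h * L) / L ≤ N L ∧ N L ≤ C * Real.exp (h * L)) :
    ∀ ε : ℝ, 0 < ε → ∃ L₀ : ℕ, 0 < L₀ ∧
      ∀ L₁ : ℕ, 0 < L₁ → ∃ L : ℕ, L₁ < L ∧ N (L - L₀) ≤ ε * N L := by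
  intro ε hε
  obtain ⟨L₂, hL₂⟩ := hbound
  obtain ⟨L₀, hL₀, hr⟩ := exists_pos_one_lt_mul_exp_mul hε hh
  refine ⟨L₀, hL₀, fun L₁ _ => ?_⟩
  by_contra! hstep
  have hgrowth :=
    tendsto_pow_mul_add_mul_atTop (inv_pos.2 hC) hL₀ (fun L hL => (hL₂ L hL).1) hr L₁
  obtain ⟨k, hk⟩ := (hgrowth.eventually_gt_atTop (N L₁)).exists
  exact (pow_mul_le_of_forall_mul_le_sub hε.le hL₀ (fun L hL => (hstep L hL).le) k).not_gt hk

theorem stmt2 (N : ℕ → ℝ) (C h : ℝ) (hC : 0 < C) (hh : 0 < h)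
    (hN0 : ∀ L, 0 ≤ N L) (hmono : Monotone N)
    (hbound : ∃ L₂ : ℕ, ∀ L : ℕ, L₂ ≤ L →
      C⁻¹ * Real.exp (h * L) / L ≤ N L ∧ N L ≤ C * Real.exp (h * L)) :
    ∀ ε : ℝ, 0 < ε → ∃ L₀ : ℕ, 0 < L₀ ∧
      ∀ L₁ : ℕ, 0 < L₁ → ∃ L : ℕ, L₁ < L ∧ N (L - L₀) ≤ ε * N L :=
  stmt2_general N C h hC hh hbound
end

section
/- Let (Ñ_j(L)) be a nondecreasing nonnegative function and N_j(L) a nondecreasing function with N_j(L) ∼ e^{hL}/(hL) as L → ∞ for some h > 0, such that Ñ_j(L) ≤ N_j(L) for all L and Σ_{k=1}^{L} Ñ_j(k) ≥ C e^{hL}/L for large L and some C > 0. Then there exist C' > 0 and M > 0 such that Ñ_j(L) ≥ C' e^{hL}/L for all sufficiently large L. -/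
/-!
Since `Ñ ≤ N = O(e^{hL}/L)` and `e^{hL}/L` grows exponentially, the partial sums
`∑_{k ≤ n} Ñ k` are `O(e^{hn}/n)`: they are dominated by their last terms, as in a
geometric series.
Hence dropping the last `m` terms of `∑_{k ≤ L} Ñ k` costs at most a fraction `O(e^{-hm})`
of `e^{hL}/L`; for `m` large the `m` dropped terms, each at most `Ñ L` by monotonicity,
must carry at least half of the lower bound `C e^{hL}/L`.
-/

open Filter Real Finset

noncomputable def expDiv (h : ℝ) (n : ℕ) : ℝ := exp (h * n) / n

theorem Monotone.sum_Ioc_le_mul {f : ℕ → ℝ} (hf : Monotone f) (a b : ℕ) :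
    ∑ k ∈ Ioc a b, f k ≤ (b - a : ℕ) * f b := by
  calc ∑ k ∈ Ioc a b, f k ≤ #(Ioc a b) • f b :=
        sum_le_card_nsmul _ _ _ fun k hk => hf (mem_Ioc.mp hk).2
    _ = (b - a : ℕ) * f b := by rw [Nat.card_Ioc, nsmul_eq_mul]

theorem sum_Ioc_le_div_one_sub {g : ℕ → ℝ} {q : ℝ} {k₀ : ℕ} (hq : q < 1) (hg₀ : 0 ≤ g k₀)
    (hg : ∀ k ≥ k₀, g k ≤ q * g (k + 1)) (n : ℕ) (hn : k₀ ≤ n) :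
    ∑ k ∈ Ioc k₀ n, g k ≤ g n / (1 - q) := by
  have hq' : 0 < 1 - q := by linarith
  induction n, hn using Nat.le_induction with
  | base => simpa using div_nonneg hg₀ hq'.le
  | succ n hn ih =>
    rw [sum_Ioc_succ_top hn]
    calc ∑ k ∈ Ioc k₀ n, g k + g (n + 1) ≤ q * g (n + 1) / (1 - q) + g (n + 1) := by
          gcongr
          exact ih.trans (by gcongr; exact hg n hn)
      _ = g (n + 1) / (1 - q) := by field_simp; ring

theorem exists_sum_Ioc_le_of_le_mul_succ {f g : ℕ → ℝ} {q A : ℝ} (hq : q < 1) (hA : 0 ≤ A)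
    (hg : Tendsto g atTop atTop) (hgq : ∀ᶠ k in atTop, g k ≤ q * g (k + 1))
    (hfg : ∀ᶠ k in atTop, f k ≤ A * g k) :
    ∃ K, 0 ≤ K ∧ ∀ᶠ n in atTop, ∑ k ∈ Ioc 0 n, f k ≤ K * g n := by
  obtain ⟨k₀, hk₀⟩ := eventually_atTop.mp ((hg.eventually_ge_atTop 0).and (hgq.and hfg))
  have hq' : 0 < 1 - q := by linarith
  refine ⟨1 + A / (1 - q), by positivity, ?_⟩
  filter_upwards [hg.eventually_ge_atTop (∑ k ∈ Ioc 0 k₀, f k), eventually_ge_atTop k₀]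
    with n hn_head hn
  have hgeom := sum_Ioc_le_div_one_sub hq (hk₀ k₀ le_rfl).1 (fun k hk => (hk₀ k hk).2.1) n hn
  calc ∑ k ∈ Ioc 0 n, f k = ∑ k ∈ Ioc 0 k₀, f k + ∑ k ∈ Ioc k₀ n, f k :=
        (sum_Ioc_consecutive _ (Nat.zero_le _) hn).symm
    _ ≤ g n + ∑ k ∈ Ioc k₀ n, A * g k := by
        gcongr with k hk
        exact (hk₀ k (mem_Ioc.mp hk).1.le).2.2
    _ ≤ g n + A * (g n / (1 - q)) := by rw [← mul_sum]; gcongr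
    _ = (1 + A / (1 - q)) * g n := by ring

section expDiv

variable {h : ℝ}

theorem tendsto_expDiv_atTop (hh : 0 < h) : Tendsto (expDiv h) atTop atTop := by
  show Tendsto (fun n : ℕ => exp (h * n) / n) atTop atTop
  simpa [Function.comp_def] using
    (tendsto_exp_mul_div_rpow_atTop 1 h hh).comp tendsto_natCast_atTop_atTop

theorem eventually_expDiv_le_mul_succ (hh : 0 < h) :
    ∀ᶠ k in atTop, expDiv h k ≤ exp (-(h / 2)) * expDiv h (k + 1) := by
  have hgap : 0 < exp (h / 2) - 1 := sub_pos.2 (one_lt_exp_iff.2 (by positivity))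
  filter_upwards [(tendsto_natCast_atTop_atTop.const_mul_atTop hgap).eventually_ge_atTop 1]
    with k hk
  have hk0 : (0 : ℝ) < k := by nlinarith
  have hexp : exp (-(h / 2)) * exp (h * (k + 1 : ℕ)) = exp (h / 2) * exp (h * k) := by
    rw [← exp_add, ← exp_add]; push_cast; ring_nf
  rw [expDiv, expDiv, ← mul_div_assoc, hexp, div_le_div_iff₀ hk0 (by positivity)]
  push_cast
  nlinarith [exp_pos (h * k)]

theorem expDiv_sub_le {m L : ℕ} (hL : 2 * m < L) :
    expDiv h (L - m) ≤ 2 * exp (-(h * m)) * expDiv h L := by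
  have hLm : (0 : ℝ) < (L - m : ℕ) := by norm_cast; omega
  have hL' : (L : ℝ) ≤ 2 * (L - m : ℕ) := by norm_cast; omega
  have hexp : exp (h * (L - m : ℕ)) = exp (-(h * m)) * exp (h * L) := by
    rw [← exp_add, Nat.cast_sub (by omega)]; ring_nf
  rw [expDiv, expDiv, hexp, mul_assoc, ← mul_div_assoc, ← mul_div_assoc,
    div_le_div_iff₀ hLm (by norm_cast; omega)]
  nlinarith [mul_pos (exp_pos (-(h * m))) (exp_pos (h * L))]

theorem eventually_le_two_div_mul_expDiv {N : ℕ → ℝ} (hh : 0 < h)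
    (hN : Tendsto (fun L : ℕ => N L * (h * L) / exp (h * L)) atTop (nhds 1)) :
    ∀ᶠ k in atTop, N k ≤ 2 / h * expDiv h k := by
  filter_upwards [hN.eventually (eventually_le_nhds one_lt_two), eventually_gt_atTop 0]
    with k hk hk0
  rw [div_le_iff₀ (exp_pos _)] at hk
  rw [expDiv, div_mul_div_comm, le_div_iff₀ (by positivity)]
  linarith

end expDiv

theorem stmt3_general (h : ℝ) (hh : 0 < h) (Nt N : ℕ → ℝ)
    (hNtmono : Monotone Nt)
    (hasymp : Filter.Tendsto (fun L : ℕ => N L * (h * L) / Real.exp (h * L))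
      Filter.atTop (nhds 1))
    (hle : ∀ L, Nt L ≤ N L)
    (hsum : ∃ C : ℝ, 0 < C ∧ ∀ᶠ L : ℕ in Filter.atTop,
      C * Real.exp (h * L) / L ≤ ∑ k ∈ Finset.Icc 1 L, Nt k) :
    ∃ C' : ℝ, 0 < C' ∧ ∀ᶠ L : ℕ in Filter.atTop,
      C' * Real.exp (h * L) / L ≤ Nt L := by
  obtain ⟨C, hC, hsum⟩ := hsum
  have hNt : ∀ᶠ k in atTop, Nt k ≤ 2 / h * expDiv h k :=
    (eventually_le_two_div_mul_expDiv hh hasymp).mono fun k hk => (hle k).trans hk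
  obtain ⟨K, hK, hK_sum⟩ := exists_sum_Ioc_le_of_le_mul_succ
    (exp_lt_one_iff.2 (by linarith : -(h / 2) < 0)) (by positivity) (tendsto_expDiv_atTop hh)
    (eventually_expDiv_le_mul_succ hh) hNt
  obtain ⟨m, hmK, hm⟩ : ∃ m : ℕ, 2 * K * exp (-(h * m)) ≤ C / 2 ∧ 0 < m := by
    have := (tendsto_exp_neg_atTop_nhds_zero.comp
      (tendsto_natCast_atTop_atTop.const_mul_atTop hh)).const_mul (2 * K)
    rw [mul_zero] at this
    exact ((this.eventually (eventually_le_nhds (half_pos hC))).and (eventually_gt_atTop 0)).exists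
  refine ⟨C / (2 * m), by positivity, ?_⟩
  filter_upwards [hsum, (tendsto_sub_atTop_nat m).eventually hK_sum, eventually_gt_atTop (2 * m)]
    with L hL_lower hL_upper hL
  have hwindow := hNtmono.sum_Ioc_le_mul (L - m) L
  rw [Nat.sub_sub_self (by omega : m ≤ L)] at hwindow
  have hsplit := sum_Ioc_consecutive Nt (Nat.zero_le (L - m)) (Nat.sub_le L m)
  have hshift := mul_le_mul_of_nonneg_left (expDiv_sub_le (h := h) hL) hK
  have hsmall := mul_le_mul_of_nonneg_right hmK (by unfold expDiv; positivity : 0 ≤ expDiv h L)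
  rw [show Icc 1 L = Ioc 0 L from Icc_add_one_left_eq_Ioc 0 L] at hL_lower
  calc C / (2 * m) * exp (h * L) / L = (C * exp (h * L) / L - C / 2 * expDiv h L) / m := by
        rw [expDiv]; field_simp; ring
    _ ≤ Nt L := by rw [div_le_iff₀ (by positivity)]; linarith

theorem stmt3 (h : ℝ) (hh : 0 < h) (Nt N : ℕ → ℝ)
    (hNt0 : ∀ L, 0 ≤ Nt L) (hNtmono : Monotone Nt) (hNmono : Monotone N)
    (hasymp : Filter.Tendsto (fun L : ℕ => N L * (h * L) / Real.exp (h * L))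
      Filter.atTop (nhds 1))
    (hle : ∀ L, Nt L ≤ N L)
    (hsum : ∃ C : ℝ, 0 < C ∧ ∀ᶠ L : ℕ in Filter.atTop,
      C * Real.exp (h * L) / L ≤ ∑ k ∈ Finset.Icc 1 L, Nt k) :
    ∃ C' : ℝ, 0 < C' ∧ ∀ᶠ L : ℕ in Filter.atTop,
      C' * Real.exp (h * L) / L ≤ Nt L :=
  stmt3_general h hh Nt N hNtmono hasymp hle hsum
end

section
/- Suppose g : ℝ≥0 → ℝ≥0 and N : ℝ≥0 → ℝ≥0 satisfy: (i) g(t) ≤ t·N(t) for all t; (ii) g(t) ∼ (c t)^n/(n! h) · e^{ht} as t → ∞ for constants c, h > 0 and n ∈ ℕ; (iii) N(t) ≤ C t^n e^{ht}/(n! h t) for large t and some C > 0; (iv) N is nondecreasing and N(t) ≤ N(t/σ) + (σ/t)·g(t) for every σ > 1 and all t. Then N(t) ∼ (c t)^n/(n!) · e^{ht}/(h t) as t → ∞. -/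
open Filter Real


/-!
STATEMENT 4: Suppose `g, N : ℝ≥0 → ℝ≥0` satisfy
(i) `g t ≤ t · N t`;
(ii) `g t ∼ (c t)^n/(n! h) · e^{ht}` as `t → ∞`;
(iii) `N t ≤ C t^n e^{ht}/(n! h t)` for large `t`;
(iv) `N` is nondecreasing and `N t ≤ N (t/σ) + (σ/t)·g t` for every `σ > 1`.
Then `N t ∼ (c t)^n/n! · e^{ht}/(h t)` as `t → ∞`.
-/

theorem stmt4 (c h : ℝ) (n : ℕ) (hc : 0 < c) (hh : 0 < h)
    (g N : ℝ → ℝ)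
    (hg0 : ∀ t, 0 ≤ t → 0 ≤ g t) (hN0 : ∀ t, 0 ≤ t → 0 ≤ N t)
    (h1 : ∀ t, 0 ≤ t → g t ≤ t * N t)
    (h2 : Filter.Tendsto
      (fun t => g t / ((c * t) ^ n / ((n.factorial : ℝ) * h) * Real.exp (h * t)))
      Filter.atTop (nhds 1))
    (h3 : ∃ C : ℝ, 0 < C ∧ ∀ᶠ t in Filter.atTop,
      N t ≤ C * t ^ n * Real.exp (h * t) / ((n.factorial : ℝ) * h * t))
    (h4 : Monotone N)
    (h5 : ∀ σ : ℝ, 1 < σ → ∀ t : ℝ, 0 < t → N t ≤ N (t / σ) + (σ / t) * g t) :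
    Filter.Tendsto
      (fun t => N t / ((c * t) ^ n / (n.factorial : ℝ) * (Real.exp (h * t) / (h * t))))
      Filter.atTop (nhds 1) := by
  obtain ⟨C, hC, hCbd⟩ := h3
  have hfac : (0:ℝ) < (n.factorial : ℝ) := by exact_mod_cast n.factorial_pos
  set F : ℝ → ℝ := fun t => (c * t) ^ n / (n.factorial : ℝ) * (Real.exp (h * t) / (h * t))
    with hFdef
  set Q : ℝ → ℝ := fun t => g t / ((c * t) ^ n / ((n.factorial : ℝ) * h) * Real.exp (h * t))
    with hQdef
  have hFpos : ∀ t : ℝ, 0 < t → 0 < F t := by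
    intro t ht
    have : (0:ℝ) < (c*t)^n := by positivity
    simp only [hFdef]
    positivity
  -- key identity: for t > 0, Q t = g t / (t * F t)
  have hQeq : ∀ t : ℝ, 0 < t → Q t = g t / (t * F t) := by
    intro t ht
    simp only [hQdef, hFdef]
    have h1 : Real.exp (h*t) ≠ 0 := (Real.exp_pos _).ne'
    field_simp
  rw [tendsto_order]
  constructor
  · -- lower bound
    intro a ha
    have hev : ∀ᶠ t in atTop, a < Q t := h2.eventually_const_lt ha
    filter_upwards [hev, eventually_gt_atTop (0:ℝ)] with t haQ ht
    have hFp := hFpos t ht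
    calc a < Q t := haQ
      _ = g t / (t * F t) := hQeq t ht
      _ ≤ (t * N t) / (t * F t) := by
          gcongr
          exact h1 t ht.le
      _ = N t / F t := mul_div_mul_left _ _ ht.ne'
  · -- upper bound
    intro b hb
    set σ : ℝ := (1 + b) / 2 with hσdef
    have hσ1 : 1 < σ := by rw [hσdef]; linarith
    have hσb : σ < b := by rw [hσdef]; linarith
    have hσ0 : 0 < σ := by linarith
    have hdiv : Tendsto (fun t : ℝ => t / σ) atTop atTop :=
      tendsto_id.atTop_div_const hσ0
    have hbd' : ∀ᶠ t in atTop,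
        N (t/σ) ≤ C * (t/σ) ^ n * Real.exp (h * (t/σ)) / ((n.factorial : ℝ) * h * (t/σ)) :=
      hdiv.eventually hCbd
    have hcoef : h / σ - h < 0 := by
      have := div_lt_self hh hσ1
      linarith
    have hlin : Tendsto (fun t : ℝ => (h/σ - h) * t) atTop atBot := by
      exact Tendsto.const_mul_atTop_of_neg hcoef tendsto_id
    have hexp : Tendsto (fun t : ℝ => Real.exp ((h/σ - h) * t)) atTop (nhds 0) :=
      Real.tendsto_exp_atBot.comp hlin
    have hK : Tendsto (fun t : ℝ => (C * σ / (σ^n * c^n)) * Real.exp ((h/σ - h) * t))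
        atTop (nhds 0) := by
      simpa using hexp.const_mul (C * σ / (σ^n * c^n))
    have hZ : Tendsto (fun t : ℝ => N (t/σ) / F t) atTop (nhds 0) := by
      refine squeeze_zero' ?_ ?_ hK
      · filter_upwards [eventually_gt_atTop (0:ℝ)] with t ht
        exact div_nonneg (hN0 _ (by positivity)) (hFpos t ht).le
      · filter_upwards [hbd', eventually_gt_atTop (0:ℝ)] with t hNb ht
        have hFp := hFpos t ht
        have key : C * (t/σ) ^ n * Real.exp (h * (t/σ)) / ((n.factorial : ℝ) * h * (t/σ)) / F t
            = (C * σ / (σ^n * c^n)) * Real.exp ((h/σ - h) * t) := by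
          have harg : (h/σ - h) * t = h * (t/σ) - h * t := by field_simp
          rw [harg, Real.exp_sub]
          simp only [hFdef]
          have h1 : Real.exp (h*t) ≠ 0 := (Real.exp_pos _).ne'
          rw [div_pow, mul_pow]
          field_simp
        calc N (t/σ) / F t
            ≤ C * (t/σ) ^ n * Real.exp (h * (t/σ)) / ((n.factorial : ℝ) * h * (t/σ)) / F t := by
              gcongr
          _ = _ := key
    have hsum : Tendsto (fun t : ℝ => N (t/σ) / F t + σ * Q t) atTop (nhds (0 + σ * 1)) :=
      hZ.add (h2.const_mul σ)
    have hσb' : (0:ℝ) + σ * 1 < b := by linarith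
    have hev : ∀ᶠ t in atTop, N (t/σ) / F t + σ * Q t < b :=
      hsum.eventually_lt_const hσb'  -- guess argument order
    filter_upwards [hev, eventually_gt_atTop (0:ℝ)] with t hlt ht
    have hFp := hFpos t ht
    have hstep : N t / F t ≤ N (t/σ) / F t + σ * Q t := by
      have h5' := h5 σ hσ1 t ht
      have : N t / F t ≤ (N (t/σ) + (σ/t) * g t) / F t := by gcongr
      rw [add_div] at this
      have heq : (σ/t) * g t / F t = σ * Q t := by
        rw [hQeq t ht]
        field_simp
        try ring
      linarith [this, heq.le, heq.ge]
    linarith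
end

section
/- Let Σ be a closed oriented surface with a separating simple closed geodesic γ_* decomposing Σ = Σ₁ ∪_{γ_*} Σ₂, with π₁(Σ_j) ⊂ π₁(Σ) free subgroups and w_{*,j} ∈ π₁(Σ_j) representing γ_*. For w_j, w'_j ∈ π₁(Σ_j) (j = 1,2) such that the geodesic in the class [w₂w₁] intersects γ_* exactly twice, the conjugacy classes [w₂w₁] = [w'₂w'₁] in π₁(Σ) if and only if there exist p, q ∈ ℤ with w₂ = w_{*,2}^p w'₂ w_{*,2}^q and w₁ = w_{*,1}^{−q} w'₁ w_{*,1}^{−p}. -/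
/-!
STATEMENT 13: Let `Σ` be a closed oriented surface with a separating simple closed
geodesic `γ_*` decomposing `Σ = Σ₁ ∪_{γ_*} Σ₂`, with `π₁(Σ_j) ⊂ π₁(Σ)` free subgroups
and `w_{*,j} ∈ π₁(Σ_j)` representing `γ_*`.  For `w_j, w'_j ∈ π₁(Σ_j)` (`j = 1,2`) such
that the geodesic in the class `[w₂w₁]` intersects `γ_*` exactly twice, the conjugacy
classes `[w₂w₁] = [w'₂w'₁]` in `π₁(Σ)` if and only if there exist `p, q ∈ ℤ` with
`w₂ = w_{*,2}^p w'₂ w_{*,2}^q` and `w₁ = w_{*,1}^{−q} w'₁ w_{*,1}^{−p}`.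

We model `π₁(Σ)` as the presented group on generators `a_i = of (i, true)`,
`b_i = of (i, false)` (`i : Fin g`, `g = g₁ + g₂`) with the single surface relation;
`π₁(Σ₁)` is the subgroup generated by the first `2g₁` generators and `π₁(Σ₂)` by the
remaining ones; `w_{*,1} = [a_1,b_1]⋯[a_{g₁},b_{g₁}]` and
`w_{*,2} = [a_g,b_g]⁻¹⋯[a_{g₁+1},b_{g₁+1}]⁻¹ = ([a_{g₁+1},b_{g₁+1}]⋯[a_g,b_g])⁻¹`.
By Lemma 4.4 of the paper, the geodesic in the class `[w₂w₁]` intersects `γ_*` exactly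
twice precisely when neither `w₁` nor `w₂` is a power of `w_{*,1}` resp. `w_{*,2}`; we
take this as the formal expression of that geometric hypothesis.
-/

open scoped commutatorElement

/-- The surface relator `[a_1,b_1]⋯[a_g,b_g]` in the free group. -/
def surfaceRel (g : ℕ) : FreeGroup (Fin g × Bool) :=
  (List.ofFn fun i : Fin g =>
    ⁅FreeGroup.of (i, true), FreeGroup.of (i, false)⁆).prod

/-- The fundamental group of the closed oriented surface of genus `g`. -/
abbrev SurfaceGroup (g : ℕ) :=
  PresentedGroup ({surfaceRel g} : Set (FreeGroup (Fin g × Bool)))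

/-- The generator `a i`. -/
def sa {g : ℕ} (i : Fin g) : SurfaceGroup g := PresentedGroup.of (i, true)

/-- The generator `b i`. -/
def sb {g : ℕ} (i : Fin g) : SurfaceGroup g := PresentedGroup.of (i, false)

/-- The commutator `[a i, b i]`. -/
def scom {g : ℕ} (i : Fin g) : SurfaceGroup g := ⁅sa i, sb i⁆

/-!
Cutting `Σ` along `γ_*` identifies `π₁(Σ)` with the amalgamated product of the free groups
`π₁(Σ₁)` and `π₁(Σ₂)` over the infinite cyclic group generated by `γ_*` (it is infinite cyclic
because free groups are torsion-free). When neither `w₁` nor `w₂` lies in the edge group, `w₂ w₁`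
is cyclically reduced of length two. Write a conjugator in normal form and peel off its last
letter: either nothing cancels, and the conjugate has normal form of length at least three, or the
letter merges with an end of `w₂ w₁` and turns it into its rotation `w₁ w₂`, shifted by the edge
group. By induction, two conjugate such words are conjugate by an edge-group element, possibly
after a rotation, and the rotation is excluded because it lists the factors in the other order.
The edge-group elements on either side of the shift are `w_*^p` and `w_*^q`.
-/

open Function

namespace Monoid.PushoutI

variable {ι H : Type*} {G : ι → Type*} [Group H] [∀ i, Group (G i)] {φ : ∀ i, H →* G i}

variable (φ) in
def wordProd (L : List (Σ i, G i)) : PushoutI φ :=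
  (L.map fun e => of e.1 e.2).prod

variable (φ) in
def ReducedList (L : List (Σ i, G i)) : Prop :=
  (∀ e ∈ L, e.2 ∉ (φ e.1).range) ∧ (L.map Sigma.fst).IsChain (· ≠ ·)

def invRev (L : List (Σ i, G i)) : List (Σ i, G i) :=
  (L.map fun e => ⟨e.1, e.2⁻¹⟩).reverse

@[simp]
theorem wordProd_nil : wordProd φ ([] : List (Σ i, G i)) = 1 := rfl

@[simp]
theorem wordProd_cons (e : Σ i, G i) (L : List (Σ i, G i)) :
    wordProd φ (e :: L) = of e.1 e.2 * wordProd φ L := by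
  simp [wordProd]

@[simp]
theorem wordProd_append (L L' : List (Σ i, G i)) :
    wordProd φ (L ++ L') = wordProd φ L * wordProd φ L' := by
  simp [wordProd]

theorem wordProd_invRev (L : List (Σ i, G i)) : wordProd φ (invRev L) = (wordProd φ L)⁻¹ := by
  induction L with
  | nil => rfl
  | cons e L ih => simp only [invRev] at ih; simp [invRev, ih]

theorem map_fst_invRev (L : List (Σ i, G i)) :
    (invRev L).map Sigma.fst = (L.map Sigma.fst).reverse := by
  simp [invRev, Function.comp_def]

@[simp]
theorem reducedList_nil : ReducedList φ ([] : List (Σ i, G i)) :=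
  ⟨by simp, List.isChain_nil⟩

theorem reducedList_append_iff {L L' : List (Σ i, G i)} :
    ReducedList φ (L ++ L') ↔ ReducedList φ L ∧ ReducedList φ L' ∧
      ∀ x ∈ (L.map Sigma.fst).getLast?, ∀ y ∈ (L'.map Sigma.fst).head?, x ≠ y := by
  simp only [ReducedList, List.forall_mem_append, List.map_append, List.isChain_append]
  tauto

theorem reducedList_pair_iff {i j : ι} {a : G i} {b : G j} :
    ReducedList φ [⟨i, a⟩, ⟨j, b⟩] ↔ a ∉ (φ i).range ∧ b ∉ (φ j).range ∧ i ≠ j := by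
  simp [ReducedList, and_assoc]

theorem reducedList_pair_comm {i j : ι} {a : G i} {b : G j} :
    ReducedList φ [⟨i, a⟩, ⟨j, b⟩] ↔ ReducedList φ [⟨j, b⟩, ⟨i, a⟩] := by
  simp only [reducedList_pair_iff, ne_comm]
  tauto

theorem ReducedList.invRev {L : List (Σ i, G i)} (hL : ReducedList φ L) :
    ReducedList φ (invRev L) := by
  refine ⟨fun e he => ?_, ?_⟩
  · simp only [PushoutI.invRev, List.mem_reverse, List.mem_map] at he
    obtain ⟨e, he, rfl⟩ := he
    simpa using hL.1 e he
  · rw [map_fst_invRev, List.isChain_reverse]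
    exact hL.2.imp fun _ _ => Ne.symm

def ReducedList.toWord {L : List (Σ i, G i)} (hL : ReducedList φ L) : CoprodI.Word G where
  toList := L
  ne_one l hl h1 := hL.1 l hl (h1 ▸ one_mem _)
  chain_ne := (List.isChain_map Sigma.fst).1 hL.2

theorem ofCoprodI_word_prod (w : CoprodI.Word G) :
    ofCoprodI (φ := φ) w.prod = wordProd φ w.toList := by
  simp [CoprodI.Word.prod, wordProd, map_list_prod, Function.comp_def]

theorem map_fst_eq_of_base_mul_wordProd_eq (hφ : ∀ i, Injective (φ i))
    {L L' : List (Σ i, G i)} (hL : ReducedList φ L) (hL' : ReducedList φ L') {h h' : H}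
    (heq : base φ h * wordProd φ L = base φ h' * wordProd φ L') :
    L.map Sigma.fst = L'.map Sigma.fst := by
  obtain ⟨d⟩ := NormalWord.transversal_nonempty φ hφ
  obtain ⟨w, hw, hwL⟩ := Reduced.exists_normalWord_prod_eq d (w := hL.toWord) hL.1
  obtain ⟨w', hw', hwL'⟩ := Reduced.exists_normalWord_prod_eq d (w := hL'.toWord) hL'.1
  have : h • w = h' • w' := NormalWord.prod_injective <| by
    rw [NormalWord.prod_base_smul, NormalWord.prod_base_smul, hw, hw', ofCoprodI_word_prod,
      ofCoprodI_word_prod]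
    exact heq
  exact hwL.symm.trans ((congrArg (fun w : NormalWord d => w.toList.map Sigma.fst) this).trans hwL')

theorem exists_base_mul_wordProd_eq (hφ : ∀ i, Injective (φ i)) (x : PushoutI φ) :
    ∃ (h : H) (L : List (Σ i, G i)), ReducedList φ L ∧ base φ h * wordProd φ L = x := by
  classical
  obtain ⟨d⟩ := NormalWord.transversal_nonempty φ hφ
  let w : NormalWord d := x • .empty
  refine ⟨w.head, w.toList, ⟨fun e he hr => w.ne_one e he ?_,
    (List.isChain_map Sigma.fst).2 w.chain_ne⟩, ?_⟩
  · -- a letter lying both in the base and in the transversal is `1`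
    have hT := w.normalized e.1 e.2 he
    have := ((d.compl e.1).equiv_fst_eq_self_of_mem_of_one_mem (d.one_mem e.1) hr).symm.trans
      ((d.compl e.1).equiv_fst_eq_one_of_mem_of_one_mem (one_mem _) hT)
    exact congrArg Subtype.val this
  · have := NormalWord.prod_smul x (NormalWord.empty (d := d))
    rw [NormalWord.prod_empty, mul_one] at this
    rw [← ofCoprodI_word_prod]
    exact this

theorem exists_wordProd_conj_eq (hφ : ∀ i, Injective (φ i)) (x w : PushoutI φ) :
    ∃ (L : List (Σ i, G i)) (h : H), ReducedList φ L ∧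
      wordProd φ L * w * (wordProd φ L)⁻¹ = base φ h * (x * w * x⁻¹) * (base φ h)⁻¹ := by
  obtain ⟨h, L, hL, rfl⟩ := exists_base_mul_wordProd_eq hφ x
  exact ⟨L, h⁻¹, hL, by simp [mul_assoc]⟩

variable (φ) in
def IsBaseConj (x y : PushoutI φ) : Prop :=
  ∃ h : H, base φ h * x * (base φ h)⁻¹ = y

theorem IsBaseConj.trans {x y z : PushoutI φ} (hxy : IsBaseConj φ x y) (hyz : IsBaseConj φ y z) :
    IsBaseConj φ x z := by
  obtain ⟨h, rfl⟩ := hxy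
  obtain ⟨h', rfl⟩ := hyz
  exact ⟨h' * h, by simp [mul_assoc]⟩

theorem base_mul_pair_mul_inv (h : H) {i j : ι} (a : G i) (b : G j) :
    base φ h * (of i a * of j b) * (base φ h)⁻¹ = of i (φ i h * a) * of j (b * φ j h⁻¹) := by
  simp only [map_mul, map_inv, of_apply_eq_base, mul_assoc]

theorem of_mul_inv_mul_of_mul (h : H) {i j : ι} (a : G i) (b : G j) :
    of (φ := φ) i (a * φ i h⁻¹) * of j (φ j h * b) = of i a * of j b := by
  simp only [map_mul, map_inv, of_apply_eq_base, mul_assoc, inv_mul_cancel_left]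

theorem reducedList_pair_shift {i j : ι} {a : G i} {b : G j} (hab : ReducedList φ [⟨i, a⟩, ⟨j, b⟩])
    (h h' : H) : ReducedList φ [⟨i, φ i h * a⟩, ⟨j, b * φ j h'⟩] := by
  simp_all [reducedList_pair_iff, Subgroup.mul_mem_cancel_left, Subgroup.mul_mem_cancel_right]

section Conjugacy

variable (hφ : ∀ i, Injective (φ i)) {i j : ι} {a : G i} {b : G j}
  (hab : ReducedList φ [⟨i, a⟩, ⟨j, b⟩])
include hφ hab

theorem base_mul_wordProd_ne_pair {L : List (Σ i, G i)} (hL : ReducedList φ L)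
    (hlen : L.length ≠ 2) (h : H) : base φ h * wordProd φ L ≠ of i a * of j b := by
  intro heq
  have := map_fst_eq_of_base_mul_wordProd_eq hφ hL hab (h' := 1) (by simpa [mul_assoc] using heq)
  simpa [hlen] using congrArg List.length this

/-- Nothing cancels in `L M L⁻¹`, so its normal form is too long to be a pair. -/
theorem wordProd_conj_ne_pair {L : List (Σ i, G i)} {m : ι} {l : G m}
    (hL : ReducedList φ (L ++ [⟨m, l⟩])) {M : List (Σ i, G i)} (hM : ReducedList φ M)
    (hhead : (M.map Sigma.fst).head? = some m) (hlast : (M.map Sigma.fst).getLast? = some m)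
    (hlen : 3 ≤ M.length) :
    wordProd φ L * wordProd φ M * (wordProd φ L)⁻¹ ≠ of i a * of j b := by
  obtain ⟨hL, -, hLm⟩ := reducedList_append_iff.1 hL
  have hLM : ReducedList φ (L ++ M) := by
    refine reducedList_append_iff.2 ⟨hL, hM, fun x hx y hy => ?_⟩
    rw [hhead, Option.mem_some_iff] at hy
    exact hy ▸ hLm x hx m rfl
  have hLML : ReducedList φ (L ++ M ++ invRev L) := by
    refine reducedList_append_iff.2 ⟨hLM, hL.invRev, fun x hx y hy => ?_⟩
    have hM0 : M.map Sigma.fst ≠ [] := by simpa using List.ne_nil_of_length_pos (by omega)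
    rw [List.map_append, List.getLast?_append_of_ne_nil _ hM0, hlast, Option.mem_some_iff] at hx
    rw [map_fst_invRev, List.head?_reverse] at hy
    exact hx ▸ (hLm y hy m rfl).symm
  have hlen' : (L ++ M ++ invRev L).length ≠ 2 := by
    simp only [List.length_append, invRev, List.length_reverse, List.length_map]
    omega
  rw [← wordProd_invRev, ← wordProd_append, ← wordProd_append, ← one_mul (wordProd φ _),
    ← map_one (base φ)]
  exact base_mul_wordProd_ne_pair hφ hab hLML hlen' 1

theorem exists_of_eq_of_conj_letter {L : List (Σ i, G i)} {m : ι} {l : G m}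
    (hL : ReducedList φ (L ++ [⟨m, l⟩])) {n : ι} (v : G n)
    (heq : wordProd φ L * (of m l * of n v * (of m l)⁻¹) * (wordProd φ L)⁻¹ = of i a * of j b) :
    ∃ v' : G m, (of m l * of n v * (of m l)⁻¹ : PushoutI φ) = of m v' := by
  by_cases hmn : m = n
  · subst hmn
    exact ⟨l * v * l⁻¹, by simp⟩
  by_cases hv : v ∈ (φ n).range
  · obtain ⟨h, rfl⟩ := hv
    exact ⟨l * φ m h * l⁻¹, by simp [of_apply_eq_base]⟩
  have hl : l ∉ (φ m).range := hL.1 ⟨m, l⟩ (by simp)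
  have hM : ReducedList φ [⟨m, l⟩, ⟨n, v⟩, ⟨m, l⁻¹⟩] := by
    simp [ReducedList, hmn, Ne.symm hmn, hl, hv, -MonoidHom.mem_range]
  refine absurd heq ?_
  simpa [mul_assoc] using wordProd_conj_ne_pair hφ hab hL hM rfl rfl le_rfl

theorem wordProd_conj_of_ne_pair (L : List (Σ i, G i)) (hL : ReducedList φ L) (n : ι) (v : G n) :
    wordProd φ L * of n v * (wordProd φ L)⁻¹ ≠ of i a * of j b := by
  induction L using List.reverseRecOn generalizing n with
  | nil =>
    by_cases hv : v ∈ (φ n).range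
    · obtain ⟨h, rfl⟩ := hv
      simpa [of_apply_eq_base] using base_mul_wordProd_ne_pair hφ hab reducedList_nil (by simp) h
    · simpa using base_mul_wordProd_ne_pair hφ hab (L := [⟨n, v⟩])
        (by simpa [ReducedList] using hv) (by simp) 1
  | append_singleton L e ih =>
    obtain ⟨m, l⟩ := e
    intro heq
    rw [wordProd_append, show wordProd φ [⟨m, l⟩] = of m l by simp] at heq
    replace heq : wordProd φ L * (of m l * of n v * (of m l)⁻¹) * (wordProd φ L)⁻¹ =
        of i a * of j b := by
      rw [← heq]; group
    obtain ⟨v', hv'⟩ := exists_of_eq_of_conj_letter hφ hab hL v heq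
    exact ih (reducedList_append_iff.1 hL).1 m v' (hv' ▸ heq)

/-- Unless `l` merges with an end of `u v`, nothing cancels (`wordProd_conj_ne_pair`); if it
does, the conjugate is the rotation `v u`, shifted by the base. -/
theorem exists_eq_of_conj_pair {L : List (Σ i, G i)} {m : ι} {l : G m}
    (hL : ReducedList φ (L ++ [⟨m, l⟩])) {p q : ι} {u : G p} {v : G q}
    (huv : ReducedList φ [⟨p, u⟩, ⟨q, v⟩])
    (heq : wordProd φ L * (of m l * (of p u * of q v) * (of m l)⁻¹) * (wordProd φ L)⁻¹ =
      of i a * of j b) :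
    ∃ k : H, (of m l * (of p u * of q v) * (of m l)⁻¹ : PushoutI φ) =
      of q (φ q k * v) * of p (u * φ p k⁻¹) := by
  obtain ⟨hu, hv, hpq⟩ := reducedList_pair_iff.1 huv
  have hl : l ∉ (φ m).range := hL.1 ⟨m, l⟩ (by simp)
  have sandwich : ∀ M, ReducedList φ M → (M.map Sigma.fst).head? = some m →
      (M.map Sigma.fst).getLast? = some m → 3 ≤ M.length →
      wordProd φ M = of m l * (of p u * of q v) * (of m l)⁻¹ → False :=
    fun M hM hhead hlast hlen hM' =>
      wordProd_conj_ne_pair hφ hab hL hM hhead hlast hlen (hM' ▸ heq)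
  by_cases hmp : m = p
  · subst hmp
    by_cases hlu : l * u ∈ (φ m).range
    · obtain ⟨k, hk⟩ := hlu
      refine ⟨k, ?_⟩
      have : u * φ m k⁻¹ = l⁻¹ := by rw [map_inv, hk]; group
      rw [this, map_mul (of q), of_apply_eq_base, ← of_apply_eq_base φ m, hk, map_mul, map_inv]
      group
    · exact (sandwich [⟨m, l * u⟩, ⟨q, v⟩, ⟨m, l⁻¹⟩]
        (by simp [ReducedList, hpq, Ne.symm hpq, hlu, hv, hl, -MonoidHom.mem_range]) rfl rfl le_rfl
        (by simp [mul_assoc])).elim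
  by_cases hmq : m = q
  · subst hmq
    by_cases hvl : v * l⁻¹ ∈ (φ m).range
    · obtain ⟨k, hk⟩ := hvl
      refine ⟨k⁻¹, ?_⟩
      have : φ m k⁻¹ * v = l := by rw [map_inv, hk]; group
      rw [this, inv_inv, map_mul (of p), of_apply_eq_base, ← of_apply_eq_base φ m, hk, map_mul,
        map_inv]
      group
    · exact (sandwich [⟨m, l⟩, ⟨p, u⟩, ⟨m, v * l⁻¹⟩]
        (by simp [ReducedList, hpq, Ne.symm hpq, hvl, hu, hl, -MonoidHom.mem_range]) rfl rfl le_rfl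
        (by simp [mul_assoc])).elim
  · exact (sandwich [⟨m, l⟩, ⟨p, u⟩, ⟨q, v⟩, ⟨m, l⁻¹⟩]
      (by simp [ReducedList, hpq, hmp, Ne.symm hmq, hu, hv, hl, -MonoidHom.mem_range])
      rfl rfl (by simp) (by simp [mul_assoc])).elim

theorem isBaseConj_of_wordProd_conj_pair (L : List (Σ i, G i)) (hL : ReducedList φ L) {p q : ι}
    {u : G p} {v : G q} (huv : ReducedList φ [⟨p, u⟩, ⟨q, v⟩])
    (heq : wordProd φ L * (of p u * of q v) * (wordProd φ L)⁻¹ = of i a * of j b) :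
    IsBaseConj φ (of p u * of q v) (of i a * of j b) ∨
      IsBaseConj φ (of q v * of p u) (of i a * of j b) := by
  induction L using List.reverseRecOn generalizing p q with
  | nil => exact Or.inl ⟨1, by simpa using heq⟩
  | append_singleton L e ih =>
    obtain ⟨m, l⟩ := e
    rw [wordProd_append, show wordProd φ [⟨m, l⟩] = of m l by simp] at heq
    replace heq : wordProd φ L * (of m l * (of p u * of q v) * (of m l)⁻¹) * (wordProd φ L)⁻¹ =
        of i a * of j b := by
      rw [← heq]; group
    obtain ⟨k, hk⟩ := exists_eq_of_conj_pair hφ hab hL huv heq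
    have huv' : ReducedList φ [⟨q, φ q k * v⟩, ⟨p, u * φ p k⁻¹⟩] :=
      reducedList_pair_shift (reducedList_pair_comm.1 huv) _ _
    rw [hk] at heq
    rcases ih (reducedList_append_iff.1 hL).1 huv' heq with hconj | hconj
    · exact Or.inr (.trans ⟨k, base_mul_pair_mul_inv k v u⟩ hconj)
    · exact Or.inl (of_mul_inv_mul_of_mul k u v ▸ hconj)

theorem conj_of_ne_pair (x : PushoutI φ) (n : ι) (v : G n) :
    x * of n v * x⁻¹ ≠ of i a * of j b := by
  intro heq
  obtain ⟨L, h, hL, hLx⟩ := exists_wordProd_conj_eq hφ x (of n v)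
  rw [heq, base_mul_pair_mul_inv] at hLx
  exact wordProd_conj_of_ne_pair hφ (reducedList_pair_shift hab h h⁻¹) L hL n v hLx

theorem isBaseConj_of_conj_pair (x : PushoutI φ) {p q : ι} {u : G p} {v : G q}
    (huv : ReducedList φ [⟨p, u⟩, ⟨q, v⟩]) (heq : x * (of p u * of q v) * x⁻¹ = of i a * of j b) :
    IsBaseConj φ (of p u * of q v) (of i a * of j b) ∨
      IsBaseConj φ (of q v * of p u) (of i a * of j b) := by
  obtain ⟨L, h, hL, hLx⟩ := exists_wordProd_conj_eq hφ x (of p u * of q v)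
  have hback : IsBaseConj φ (base φ h * (of i a * of j b) * (base φ h)⁻¹) (of i a * of j b) :=
    ⟨h⁻¹, by simp [mul_assoc]⟩
  rw [heq] at hLx
  rw [base_mul_pair_mul_inv] at hLx hback
  refine (isBaseConj_of_wordProd_conj_pair hφ (reducedList_pair_shift hab h h⁻¹) L hL huv hLx).imp
    (·.trans hback) (·.trans hback)

end Conjugacy

theorem exists_eq_of_pair_eq (hφ : ∀ i, Injective (φ i)) {i j : ι} (hij : i ≠ j) {a a' : G i}
    {b b' : G j} (heq : of (φ := φ) i a * of j b = of i a' * of j b') :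
    ∃ k : H, a' = a * φ i k ∧ b' = φ j k⁻¹ * b := by
  have hij' : of (φ := φ) i (a'⁻¹ * a) = of j (b' * b⁻¹) := by
    simp only [map_mul, map_inv]
    rw [inv_mul_eq_iff_eq_mul, ← mul_assoc, ← heq, mul_inv_cancel_right]
  obtain ⟨k, hk⟩ : of (φ := φ) i (a'⁻¹ * a) ∈ (base φ).range := by
    rw [← inf_of_range_eq_base_range hφ hij]
    exact ⟨⟨_, rfl⟩, ⟨_, hij'.symm⟩⟩
  have hi : a'⁻¹ * a = φ i k := of_injective hφ i (by rw [of_apply_eq_base, hk])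
  have hj : b' * b⁻¹ = φ j k := of_injective hφ j (by rw [of_apply_eq_base, hk, hij'])
  refine ⟨k⁻¹, ?_, ?_⟩
  · rw [map_inv, ← hi]; group
  · rw [inv_inv, ← hj]; group

theorem pair_ne_pair_swap (hφ : ∀ i, Injective (φ i)) {i j : ι} {a a' : G i} {b b' : G j}
    (hab : ReducedList φ [⟨i, a⟩, ⟨j, b⟩]) (hba : ReducedList φ [⟨j, b'⟩, ⟨i, a'⟩]) :
    of (φ := φ) i a * of j b ≠ of j b' * of i a' := by
  intro heq
  have := map_fst_eq_of_base_mul_wordProd_eq hφ hab hba (h := 1) (h' := 1) (by simpa using heq)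
  simp only [List.map_cons, List.map_nil, List.cons.injEq] at this
  exact (reducedList_pair_iff.1 hab).2.2 this.1

theorem exists_eq_mul_mul_of_isConj_pair (hφ : ∀ i, Injective (φ i)) {i j : ι} (hij : i ≠ j)
    {a a' : G i} {b b' : G j} (ha : a ∉ (φ i).range) (hb : b ∉ (φ j).range)
    (hconj : IsConj (of (φ := φ) i a * of j b) (of i a' * of j b')) :
    ∃ p q : H, a = φ i p * a' * φ i q ∧ b = φ j q⁻¹ * b' * φ j p⁻¹ := by
  have hab : ReducedList φ [⟨i, a⟩, ⟨j, b⟩] := reducedList_pair_iff.2 ⟨ha, hb, hij⟩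
  obtain ⟨x, hx⟩ := isConj_iff.1 hconj.symm
  by_cases ha' : a' ∈ (φ i).range
  · obtain ⟨k, rfl⟩ := ha'
    rw [of_apply_eq_base, ← of_apply_eq_base φ j, ← map_mul] at hx
    exact absurd hx (conj_of_ne_pair hφ hab x j _)
  by_cases hb' : b' ∈ (φ j).range
  · obtain ⟨k, rfl⟩ := hb'
    rw [of_apply_eq_base, ← of_apply_eq_base φ i, ← map_mul] at hx
    exact absurd hx (conj_of_ne_pair hφ hab x i _)
  have hab' : ReducedList φ [⟨i, a'⟩, ⟨j, b'⟩] := reducedList_pair_iff.2 ⟨ha', hb', hij⟩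
  rcases isBaseConj_of_conj_pair hφ hab x hab' hx with ⟨h, hh⟩ | ⟨h, hh⟩
  · rw [base_mul_pair_mul_inv] at hh
    obtain ⟨k, hka, hkb⟩ := exists_eq_of_pair_eq hφ hij hh
    exact ⟨h, k, hka, by rw [hkb, mul_assoc]⟩
  · rw [base_mul_pair_mul_inv] at hh
    exact absurd hh.symm (pair_ne_pair_swap hφ hab (reducedList_pair_shift
      (reducedList_pair_comm.1 hab') h h⁻¹))

end Monoid.PushoutI

theorem zpowersHom_injective {K : Type*} [Group K] [IsMulTorsionFree K] {x : K} (hx : x ≠ 1) :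
    Injective (zpowersHom K x) :=
  (injective_zpow_iff_not_isOfFinOrder.2 (by rwa [isOfFinOrder_iff_eq_one])).comp
    Multiplicative.toAdd.injective

section Surface

open Monoid PushoutI

theorem surfaceRel_add (m n : ℕ) :
    surfaceRel (m + n) = FreeGroup.map (fun x => (Fin.castAdd n x.1, x.2)) (surfaceRel m) *
      FreeGroup.map (fun x => (Fin.natAdd m x.1, x.2)) (surfaceRel n) := by
  simp only [surfaceRel, List.ofFn_add, List.prod_append, map_list_prod, List.map_ofFn,
    Function.comp_def, map_commutatorElement, FreeGroup.map.of]
  rfl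

theorem surfaceRel_ne_one {n : ℕ} (hn : 1 ≤ n) : surfaceRel n ≠ 1 := by
  obtain ⟨n, rfl⟩ := Nat.exists_eq_add_of_le' hn
  -- killing all generators but `a₀ ↦ (0 1)`, `b₀ ↦ (1 2)` sends the relator to a 3-cycle
  let f : Fin (n + 1) × Bool → Equiv.Perm (Fin 3) := fun x =>
    if x.1 = 0 then (if x.2 then Equiv.swap 0 1 else Equiv.swap 1 2) else 1
  have hf : FreeGroup.lift f (surfaceRel (n + 1)) = ⁅Equiv.swap (0 : Fin 3) 1, Equiv.swap 1 2⁆ := by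
    simp [surfaceRel, List.ofFn_succ, f, map_commutatorElement, map_list_prod, Function.comp_def,
      Fin.succ_ne_zero]
  intro h
  rw [h, map_one] at hf
  exact absurd hf (by decide)

variable (g₁ g₂ : ℕ)

abbrev halfGenus : Bool → ℕ
  | false => g₁
  | true => g₂

abbrev HalfGroup (b : Bool) : Type := FreeGroup (Fin (halfGenus g₁ g₂ b) × Bool)

/-- `γ_*` read in `π₁(Σ₁)` (`b = false`) and in `π₁(Σ₂)` (`b = true`), oriented as `w_{*,1}` and
`w_{*,2}`. -/
def boundary : ∀ b, HalfGroup g₁ g₂ b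
  | false => surfaceRel g₁
  | true => (surfaceRel g₂)⁻¹

def boundaryHom (b : Bool) : Multiplicative ℤ →* HalfGroup g₁ g₂ b :=
  zpowersHom _ (boundary g₁ g₂ b)

theorem boundaryHom_injective (hg₁ : 1 ≤ g₁) (hg₂ : 1 ≤ g₂) (b : Bool) :
    Injective (boundaryHom g₁ g₂ b) := by
  refine zpowersHom_injective ?_
  cases b
  · exact surfaceRel_ne_one hg₁
  · exact inv_ne_one.2 (surfaceRel_ne_one hg₂)

def halfIndex : ∀ b, Fin (halfGenus g₁ g₂ b) → Fin (g₁ + g₂)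
  | false => Fin.castAdd g₂
  | true => Fin.natAdd g₁

def halfIncl (b : Bool) : HalfGroup g₁ g₂ b →* SurfaceGroup (g₁ + g₂) :=
  (PresentedGroup.mk _).comp (FreeGroup.map fun x => (halfIndex g₁ g₂ b x.1, x.2))

theorem halfIncl_boundaryHom (b : Bool) (k : Multiplicative ℤ) :
    halfIncl g₁ g₂ b (boundaryHom g₁ g₂ b k) = halfIncl g₁ g₂ b (boundary g₁ g₂ b) ^ k.toAdd := by
  simp [boundaryHom]

def amalgamGen (x : Fin (g₁ + g₂) × Bool) : PushoutI (boundaryHom g₁ g₂) :=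
  Fin.addCases (fun k => of false (FreeGroup.of (k, x.2)))
    (fun k => of true (FreeGroup.of (k, x.2))) x.1

theorem lift_amalgamGen_map (b : Bool) (x : HalfGroup g₁ g₂ b) :
    FreeGroup.lift (amalgamGen g₁ g₂) (FreeGroup.map (fun y => (halfIndex g₁ g₂ b y.1, y.2)) x) =
      of b x := by
  refine DFunLike.congr_fun (FreeGroup.ext_hom ((FreeGroup.lift _).comp (FreeGroup.map _))
    (of (φ := boundaryHom g₁ g₂) b) fun y => ?_) x
  cases b <;> simp [amalgamGen, halfIndex]

theorem of_boundary (b : Bool) :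
    of (φ := boundaryHom g₁ g₂) b (boundary g₁ g₂ b) = base _ (Multiplicative.ofAdd 1) := by
  rw [← of_apply_eq_base _ b]
  simp [boundaryHom]

theorem lift_amalgamGen_surfaceRel :
    FreeGroup.lift (amalgamGen g₁ g₂) (surfaceRel (g₁ + g₂)) = 1 := by
  have h₁ : FreeGroup.lift (amalgamGen g₁ g₂)
      (FreeGroup.map (fun x => (Fin.castAdd g₂ x.1, x.2)) (surfaceRel g₁)) =
        base _ (Multiplicative.ofAdd 1) :=
    (lift_amalgamGen_map g₁ g₂ false _).trans (of_boundary g₁ g₂ false)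
  have h₂ : FreeGroup.lift (amalgamGen g₁ g₂)
      (FreeGroup.map (fun x => (Fin.natAdd g₁ x.1, x.2)) (surfaceRel g₂)) =
        (base _ (Multiplicative.ofAdd 1))⁻¹ := by
    rw [← of_boundary g₁ g₂ true, boundary, map_inv, inv_inv]
    exact lift_amalgamGen_map g₁ g₂ true _
  rw [surfaceRel_add, map_mul, h₁, h₂, mul_inv_cancel]

def toAmalgam : SurfaceGroup (g₁ + g₂) →* PushoutI (boundaryHom g₁ g₂) :=
  PresentedGroup.toGroup fun _ hr =>
    (Set.mem_singleton_iff.1 hr) ▸ lift_amalgamGen_surfaceRel g₁ g₂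

theorem toAmalgam_halfIncl (b : Bool) (x : HalfGroup g₁ g₂ b) :
    toAmalgam g₁ g₂ (halfIncl g₁ g₂ b x) = of b x :=
  lift_amalgamGen_map g₁ g₂ b x

theorem halfIncl_boundary_false_eq_true :
    halfIncl g₁ g₂ false (boundary g₁ g₂ false) = halfIncl g₁ g₂ true (boundary g₁ g₂ true) := by
  have h : PresentedGroup.mk {surfaceRel (g₁ + g₂)}
      (FreeGroup.map (fun x => (Fin.castAdd g₂ x.1, x.2)) (surfaceRel g₁) *
        FreeGroup.map (fun x => (Fin.natAdd g₁ x.1, x.2)) (surfaceRel g₂)) = 1 := by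
    rw [← surfaceRel_add]
    exact PresentedGroup.one_of_mem rfl
  rw [map_mul] at h
  exact (eq_inv_of_mul_eq_one_left h).trans (map_inv (halfIncl g₁ g₂ true) _).symm

theorem halfIncl_surfaceRel (b : Bool) :
    halfIncl g₁ g₂ b (surfaceRel (halfGenus g₁ g₂ b)) =
      (List.ofFn fun k => scom (halfIndex g₁ g₂ b k)).prod := by
  simp only [surfaceRel, map_list_prod, List.map_ofFn, Function.comp_def, map_commutatorElement]
  rfl

theorem filter_finRange_lt :
    (List.finRange (g₁ + g₂)).filter (fun i : Fin (g₁ + g₂) => (i : ℕ) < g₁) =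
      List.ofFn (Fin.castAdd g₂ : Fin g₁ → Fin (g₁ + g₂)) := by
  rw [← List.ofFn_id, List.ofFn_add, List.filter_append,
    List.filter_eq_self.2 (by simp [List.mem_ofFn]),
    List.filter_eq_nil_iff.2 (by simp [List.mem_ofFn]), List.append_nil]
  rfl

theorem filter_finRange_ge :
    (List.finRange (g₁ + g₂)).filter (fun i : Fin (g₁ + g₂) => g₁ ≤ (i : ℕ)) =
      List.ofFn (Fin.natAdd g₁ : Fin g₂ → Fin (g₁ + g₂)) := by
  rw [← List.ofFn_id, List.ofFn_add, List.filter_append,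
    List.filter_eq_nil_iff.2 (by simp [List.mem_ofFn]),
    List.filter_eq_self.2 (by simp [List.mem_ofFn]), List.nil_append]
  rfl

theorem prod_scom_filter_lt :
    (((List.finRange (g₁ + g₂)).filter fun i : Fin (g₁ + g₂) => (i : ℕ) < g₁).map scom).prod =
      halfIncl g₁ g₂ false (boundary g₁ g₂ false) := by
  rw [filter_finRange_lt, List.map_ofFn]
  exact (halfIncl_surfaceRel g₁ g₂ false).symm

theorem inv_prod_scom_filter_ge :
    ((((List.finRange (g₁ + g₂)).filter fun i : Fin (g₁ + g₂) => g₁ ≤ (i : ℕ)).map scom).prod)⁻¹ =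
      halfIncl g₁ g₂ true (boundary g₁ g₂ true) := by
  rw [filter_finRange_ge, List.map_ofFn, boundary, map_inv]
  exact congrArg _ (halfIncl_surfaceRel g₁ g₂ true).symm

theorem closure_le_range_halfIncl_false :
    Subgroup.closure {x | ∃ i : Fin (g₁ + g₂), (i : ℕ) < g₁ ∧ (x = sa i ∨ x = sb i)} ≤
      (halfIncl g₁ g₂ false).range := by
  rw [Subgroup.closure_le]
  rintro x ⟨i, hi, rfl | rfl⟩
  · exact ⟨FreeGroup.of (⟨i, hi⟩, true), rfl⟩
  · exact ⟨FreeGroup.of (⟨i, hi⟩, false), rfl⟩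

theorem closure_le_range_halfIncl_true :
    Subgroup.closure {x | ∃ i : Fin (g₁ + g₂), g₁ ≤ (i : ℕ) ∧ (x = sa i ∨ x = sb i)} ≤
      (halfIncl g₁ g₂ true).range := by
  rw [Subgroup.closure_le]
  rintro x ⟨i, hi, hx⟩
  obtain ⟨k, rfl⟩ : ∃ k : Fin g₂, Fin.natAdd g₁ k = i :=
    ⟨⟨i - g₁, by omega⟩, Fin.ext (by simp only [Fin.val_natAdd]; omega)⟩
  rcases hx with rfl | rfl
  · exact ⟨FreeGroup.of (k, true), rfl⟩
  · exact ⟨FreeGroup.of (k, false), rfl⟩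

end Surface

theorem stmt13 (g g₁ g₂ : ℕ) (hg₁ : 1 ≤ g₁) (hg₂ : 1 ≤ g₂) (hg : g = g₁ + g₂)
    (wstar1 wstar2 : SurfaceGroup g)
    (hwstar1 : wstar1 = (((List.finRange g).filter fun i : Fin g => (i : ℕ) < g₁).map scom).prod)
    (hwstar2 : wstar2 = ((((List.finRange g).filter fun i : Fin g => g₁ ≤ (i : ℕ)).map scom).prod)⁻¹)
    -- `π₁(Σ₁)` and `π₁(Σ₂)` as subgroups of `π₁(Σ)`
    (S₁ S₂ : Set (SurfaceGroup g))
    (hS₁ : S₁ = {x | ∃ i : Fin g, (i : ℕ) < g₁ ∧ (x = sa i ∨ x = sb i)})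
    (hS₂ : S₂ = {x | ∃ i : Fin g, g₁ ≤ (i : ℕ) ∧ (x = sa i ∨ x = sb i)})
    (w₁ w₁' : SurfaceGroup g) (hw₁ : w₁ ∈ Subgroup.closure S₁)
    (hw₁' : w₁' ∈ Subgroup.closure S₁)
    (w₂ w₂' : SurfaceGroup g) (hw₂ : w₂ ∈ Subgroup.closure S₂)
    (hw₂' : w₂' ∈ Subgroup.closure S₂)
    -- the geodesic in the class `[w₂ w₁]` intersects `γ_*` exactly twice:
    (htwice₁ : ∀ k : ℤ, w₁ ≠ wstar1 ^ k) (htwice₂ : ∀ k : ℤ, w₂ ≠ wstar2 ^ k) :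
    IsConj (w₂ * w₁) (w₂' * w₁') ↔
      ∃ p q : ℤ, w₂ = wstar2 ^ p * w₂' * wstar2 ^ q ∧
        w₁ = wstar1 ^ (-q) * w₁' * wstar1 ^ (-p) := by
  subst hg hwstar1 hwstar2 hS₁ hS₂
  obtain ⟨u₁, rfl⟩ := closure_le_range_halfIncl_false g₁ g₂ hw₁
  obtain ⟨u₁', rfl⟩ := closure_le_range_halfIncl_false g₁ g₂ hw₁'
  obtain ⟨u₂, rfl⟩ := closure_le_range_halfIncl_true g₁ g₂ hw₂
  obtain ⟨u₂', rfl⟩ := closure_le_range_halfIncl_true g₁ g₂ hw₂'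
  rw [prod_scom_filter_lt] at htwice₁ ⊢
  rw [inv_prod_scom_filter_ge] at htwice₂ ⊢
  have hu₁ : u₁ ∉ (boundaryHom g₁ g₂ false).range := by
    rintro ⟨k, rfl⟩
    exact htwice₁ k.toAdd (halfIncl_boundaryHom g₁ g₂ false k)
  have hu₂ : u₂ ∉ (boundaryHom g₁ g₂ true).range := by
    rintro ⟨k, rfl⟩
    exact htwice₂ k.toAdd (halfIncl_boundaryHom g₁ g₂ true k)
  constructor
  · intro hconj
    replace hconj := (toAmalgam g₁ g₂).map_isConj hconj
    simp only [map_mul, toAmalgam_halfIncl g₁ g₂ true, toAmalgam_halfIncl g₁ g₂ false] at hconj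
    obtain ⟨p, q, hp, hq⟩ := Monoid.PushoutI.exists_eq_mul_mul_of_isConj_pair
      (boundaryHom_injective g₁ g₂ hg₁ hg₂) (by decide) hu₂ hu₁ hconj
    exact ⟨p.toAdd, q.toAdd, by simp [hp, halfIncl_boundaryHom g₁ g₂ true],
      by simp [hq, halfIncl_boundaryHom g₁ g₂ false]⟩
  · rintro ⟨p, q, hp, hq⟩
    rw [hp, hq, ← halfIncl_boundary_false_eq_true]
    exact (isConj_iff.2 ⟨halfIncl g₁ g₂ false (boundary g₁ g₂ false) ^ p, by group⟩).symm
end
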